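/- arXiv:2210.13850 — 2 statements merged into one kernel-verified Lean document; each statement's English description precedes it below -/
import Mathlib

section
/- Let α ≥ (1+√17)/4 and let Opt₁, Opt₂, t, s, p, d, a ≥ 0 be real numbers satisfying: t ≥ α·Opt₁, t + s ≤ (1+α)·Opt₁, p ≤ Opt₁, Opt₂ ≥ α·Opt₁ + d (release-time bound), t + s + p > α·Opt₂ (no interruption), and a ≤ Opt₂ - α·Opt₁. Then d + a ≤ Opt₂. -/
/-! Since `t + s ≤ (1 + α)·Opt₁` and `p ≤ Opt₁`, the no-interruption condition gives
`α·Opt₂ < (2 + α)·Opt₁`, so the release-time bound yields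
`d ≤ Opt₂ - α·Opt₁ < (1 + 2/α - α)·Opt₁`. For `α ≥ (1 + √17)/4`, the larger root of
`2α² - α - 2`, we have `1 + 2/α - 2α ≤ 0`, hence `d ≤ α·Opt₁`, and adding `a ≤ Opt₂ - α·Opt₁`
gives the claim. -/

lemma one_add_two_div_sub_two_mul_nonpos {α : ℝ} (hα : (1 + √17) / 4 ≤ α) :
    1 + 2 / α - 2 * α ≤ 0 := by
  have hsqrt : √17 ^ 2 = 17 := Real.sq_sqrt (by norm_num)
  have hsqrt_ge : 3 ≤ √17 := by nlinarith [Real.sqrt_nonneg 17]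
  have hα_pos : 0 < α := by linarith
  -- `2α² - α - 2 = 2 (α - (1 + √17)/4) (α - (1 - √17)/4)`, and both factors are nonnegative.
  have hquad : α + 2 ≤ 2 * α ^ 2 := by nlinarith
  have h : 2 / α ≤ 2 * α - 1 := by
    rw [div_le_iff₀ hα_pos]
    linarith
  linarith

lemma mul_lt_two_add_mul_of_no_interruption {α Opt₁ Opt₂ t s p : ℝ}
    (hgood : t + s ≤ (1 + α) * Opt₁) (hpb : p ≤ Opt₁) (hnoint : α * Opt₂ < t + s + p) :
    α * Opt₂ < (2 + α) * Opt₁ := by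
  linarith

lemma le_one_add_two_div_sub_mul {α Opt₁ Opt₂ d : ℝ} (hα : 0 < α)
    (hOpt : α * Opt₂ < (2 + α) * Opt₁) (hrel : α * Opt₁ + d ≤ Opt₂) :
    d ≤ (1 + 2 / α - α) * Opt₁ := by
  have hd : α * d < α * ((1 + 2 / α - α) * Opt₁) := by
    calc α * d ≤ α * Opt₂ - α ^ 2 * Opt₁ := by nlinarith
      _ < (2 + α) * Opt₁ - α ^ 2 * Opt₁ := by linarith
      _ = α * ((1 + 2 / α - α) * Opt₁) := by field_simp; ring
  exact (lt_of_mul_lt_mul_left hd hα.le).le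

theorem stmt_14_general (α Opt₁ Opt₂ t s p d a : ℝ) (hα : (1 + Real.sqrt 17) / 4 ≤ α)
    (hOpt₁ : 0 ≤ Opt₁) (hgood : t + s ≤ (1 + α) * Opt₁)
    (hpb : p ≤ Opt₁) (hrel : α * Opt₁ + d ≤ Opt₂)
    (hnoint : α * Opt₂ < t + s + p) (hobs : a ≤ Opt₂ - α * Opt₁) :
    d + a ≤ Opt₂ := by
  have hα_pos : 0 < α := lt_of_lt_of_le (by positivity) hα
  have hd : d ≤ α * Opt₁ :=
    calc d ≤ (1 + 2 / α - α) * Opt₁ :=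
          le_one_add_two_div_sub_mul hα_pos
            (mul_lt_two_add_mul_of_no_interruption hgood hpb hnoint) hrel
      _ ≤ α * Opt₁ := by
          gcongr
          linarith [one_add_two_div_sub_two_mul_nonpos hα]
  linarith

theorem stmt_14 (α Opt₁ Opt₂ t s p d a : ℝ) (hα : (1 + Real.sqrt 17) / 4 ≤ α)
    (hOpt₁ : 0 ≤ Opt₁) (hOpt₂ : 0 ≤ Opt₂) (ht : 0 ≤ t) (hs : 0 ≤ s)
    (hp : 0 ≤ p) (hd : 0 ≤ d) (ha : 0 ≤ a)
    (hwait : α * Opt₁ ≤ t) (hgood : t + s ≤ (1 + α) * Opt₁)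
    (hpb : p ≤ Opt₁) (hrel : α * Opt₁ + d ≤ Opt₂)
    (hnoint : α * Opt₂ < t + s + p) (hobs : a ≤ Opt₂ - α * Opt₁) :
    d + a ≤ Opt₂ :=
  stmt_14_general α Opt₁ Opt₂ t s p d a hα hOpt₁ hgood hpb hrel hnoint hobs
end

section
/- Let α ≥ (3+√129)/10 and let Opt₁, Opt₂, d, p ≥ 0 be real numbers with Opt₂ ≥ α·Opt₁ and d > α·Opt₂ - Opt₁. If additionally Opt₂ ≥ α·Opt₁ + d - (Opt₁ + p)/2 - p and Opt₂ > p + α·Opt₂ - Opt₁, then Opt₂ > Opt₂, a contradiction; hence the four hypotheses are jointly unsatisfiable. -/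
/-!
Eliminating `d` between the second and third hypotheses and then `p` with the fourth leaves
`(α - 3) Opt₁ + (5/2)(α - 1) Opt₂ < 0`. On the cone `0 ≤ Opt₁`, `α Opt₁ ≤ Opt₂` this linear form
is nonnegative as soon as `5α² - 3α - 6 ≥ 0`, i.e. `α ≥ (3 + √129)/10`: it is linear in `Opt₁`,
and at the edge `Opt₁ = Opt₂ / α` it equals `(5α² - 3α - 6) Opt₂ / (2α)`.
-/

lemma five_mul_sq_sub_three_mul_sub_six_nonneg {α : ℝ} (hα : (3 + Real.sqrt 129) / 10 ≤ α) :
    0 ≤ 5 * α ^ 2 - 3 * α - 6 := by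
  have hsqrt : Real.sqrt 129 ^ 2 = 129 := Real.sq_sqrt (by norm_num)
  have hroot : 0 ≤ Real.sqrt 129 := Real.sqrt_nonneg _
  nlinarith

lemma sub_three_mul_add_mul_sub_one_nonneg {α a b : ℝ} (hα : 0 < α)
    (hcoef : 0 ≤ 5 * α ^ 2 - 3 * α - 6) (ha : 0 ≤ a) (hb : 0 ≤ b) (hab : α * a ≤ b) :
    0 ≤ (α - 3) * a + 5 / 2 * (α - 1) * b := by
  rcases le_or_gt α 3 with hα3 | hα3
  · have hscaled : 0 ≤ α * ((α - 3) * a + 5 / 2 * (α - 1) * b) :=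
      calc 0 ≤ (5 * α ^ 2 - 3 * α - 6) * b / 2 := by positivity
        _ = (α - 3) * b + 5 / 2 * α * (α - 1) * b := by ring
        _ ≤ (α - 3) * (α * a) + 5 / 2 * α * (α - 1) * b := by
          gcongr ?_ + _
          exact mul_le_mul_of_nonpos_left hab (by linarith)
        _ = α * ((α - 3) * a + 5 / 2 * (α - 1) * b) := by ring
    exact nonneg_of_mul_nonneg_right (by linarith) hα
  · have : 0 ≤ α - 3 := by linarith
    have : 0 ≤ α - 1 := by linarith
    positivity

theorem stmt_16_general (α Opt₁ Opt₂ d p : ℝ) (hα : (3 + Real.sqrt 129) / 10 ≤ α)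
    (hOpt₁ : 0 ≤ Opt₁) (hOpt₂ : 0 ≤ Opt₂)
    (h1 : α * Opt₁ ≤ Opt₂) (h2 : α * Opt₂ - Opt₁ < d)
    (h3 : α * Opt₁ + d - (Opt₁ + p) / 2 - p ≤ Opt₂)
    (h4 : p + α * Opt₂ - Opt₁ < Opt₂) :
    False := by
  have hform : (α - 3) * Opt₁ + 5 / 2 * (α - 1) * Opt₂ < 0 := by linarith
  have hroot : 0 ≤ Real.sqrt 129 := Real.sqrt_nonneg _
  have hαpos : 0 < α := by linarith
  have := sub_three_mul_add_mul_sub_one_nonneg hαpos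
    (five_mul_sq_sub_three_mul_sub_six_nonneg hα) hOpt₁ hOpt₂ h1
  linarith

theorem stmt_16 (α Opt₁ Opt₂ d p : ℝ) (hα : (3 + Real.sqrt 129) / 10 ≤ α)
    (hOpt₁ : 0 ≤ Opt₁) (hOpt₂ : 0 ≤ Opt₂) (hd : 0 ≤ d) (hp : 0 ≤ p)
    (h1 : α * Opt₁ ≤ Opt₂) (h2 : α * Opt₂ - Opt₁ < d)
    (h3 : α * Opt₁ + d - (Opt₁ + p) / 2 - p ≤ Opt₂)
    (h4 : p + α * Opt₂ - Opt₁ < Opt₂) :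
    False :=
  stmt_16_general α Opt₁ Opt₂ d p hα hOpt₁ hOpt₂ h1 h2 h3 h4
end
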